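/- In the twisted group algebra A(S_n), for 1 ≤ k ≤ n-1 and k ≤ p ≤ n, with β*_{n-k+1,p} := Σ_{k ≤ m ≤ p} t_{m,k}*, the identity β*_{n-k+1,p} · (id − t_{p,k}*) = (id − (t_k*)²·t_{p,k+1}*) · β*_{n-k+1,p-1} holds. -/

import Mathlib

open MvPolynomial

/-- The polynomial ring `R_n = ℂ[X_{ab} : 1 ≤ a,b ≤ n]` in `n²` commuting variables. -/
abbrev R (n : ℕ) : Type := MvPolynomial (Fin n × Fin n) ℂ

/-- The action of `S_n` on `R_n`: `g.X_{ab} = X_{g(a) g(b)}`. -/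
noncomputable def permAct {n : ℕ} (g : Equiv.Perm (Fin n)) (p : R n) : R n :=
  MvPolynomial.rename (fun ab => (g ab.1, g ab.2)) p

/-- The twisted group algebra `A(S_n) = R_n ⋊ ℂ[S_n]`, as formal `R_n`-linear
combinations of permutations. -/
abbrev A (n : ℕ) : Type := Equiv.Perm (Fin n) →₀ R n

/-- The identity element `id = 1·id` of `A(S_n)`. -/
noncomputable instance {n : ℕ} : One (A n) := ⟨Finsupp.single 1 1⟩

/-- The twisted multiplication `(p₁ g₁)·(p₂ g₂) = (p₁ · (g₁.p₂)) g₁g₂` on `A(S_n)`. -/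
noncomputable instance {n : ℕ} : Mul (A n) :=
  ⟨fun x y => x.sum fun g₁ p₁ => y.sum fun g₂ p₂ =>
    Finsupp.single (g₁ * g₂) (p₁ * permAct g₁ p₂)⟩

/-- The set of inversions `I(g) = {(a,b) : a < b, g(a) > g(b)}`. -/
def inversions {n : ℕ} (g : Equiv.Perm (Fin n)) : Finset (Fin n × Fin n) :=
  Finset.univ.filter fun ab => ab.1 < ab.2 ∧ g ab.2 < g ab.1

/-- The monomial `X_g = ∏_{(a,b) ∈ I(g⁻¹)} X_{ab}`. -/
noncomputable def Xg {n : ℕ} (g : Equiv.Perm (Fin n)) : R n :=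
  ∏ ab ∈ inversions g⁻¹, MvPolynomial.X ab

/-- The element `g* = X_g · g ∈ A(S_n)`. -/
noncomputable def gstar {n : ℕ} (g : Equiv.Perm (Fin n)) : A n :=
  Finsupp.single g (Xg g)

/-- The cycle `t_{k,j}` sending `m ↦ m+1` for `j ≤ m ≤ k-1` and `k ↦ j`,
fixing all points outside `[j,k]` (meaningful for `j ≤ k`). -/
def cyc {n : ℕ} [NeZero n] (k j : Fin n) : Equiv.Perm (Fin n) :=
  Equiv.permCongr (Equiv.addLeft j) (Fin.cycleRange (k - j))

/-!
Split off the term `m = p` of the left-hand sum and the term `m = k` of the sum produced by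
`β* · t_{p,k}*` (where `t_{k,k} = id`); after reindexing `m ↦ m + 1`, the identity reduces
to the termwise relation `t_{m+1,k}* t_{p,k}* = (t_k*)² t_{p,k+1}* t_{m,k}*` for `k ≤ m < p`.
On permutations this is `t_{m+1,k} t_{p,k} = t_{p,k+1} t_{m,k}`. On coefficients, the
inversions of `t_{m,j}⁻¹` are the pairs `(j, b)` with `j < b ≤ m`, so
`X_{t_{m,j}} = ∏_{j < b ≤ m} X_{jb}`, and comparing the two resulting products of variables
leaves exactly the factor `X_{k,k+1} X_{k+1,k}`.
-/

open Finset

lemma permAct_one {n : ℕ} (p : R n) : permAct 1 p = p :=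
  rename_id_apply p

lemma permAct_prod_X {n : ℕ} (g : Equiv.Perm (Fin n)) (c : Fin n) (s : Finset (Fin n)) :
    permAct g (∏ b ∈ s, X (c, b)) = ∏ b ∈ s.map g.toEmbedding, X (g c, b) := by
  simp [permAct, prod_map]

namespace A

variable {n : ℕ}

lemma mul_def (x y : A n) :
    x * y = x.sum fun g₁ p₁ => y.sum fun g₂ p₂ =>
      Finsupp.single (g₁ * g₂) (p₁ * permAct g₁ p₂) := rfl

lemma one_def : (1 : A n) = Finsupp.single 1 1 := rfl

lemma single_mul (g : Equiv.Perm (Fin n)) (p : R n) (y : A n) :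
    Finsupp.single g p * y = y.sum fun h q => Finsupp.single (g * h) (p * permAct g q) := by
  rw [mul_def, Finsupp.sum_single_index]
  simp

lemma mul_single (x : A n) (h : Equiv.Perm (Fin n)) (q : R n) :
    x * Finsupp.single h q = x.sum fun g p => Finsupp.single (g * h) (p * permAct g q) := by
  rw [mul_def]
  refine Finsupp.sum_congr fun g _ => ?_
  rw [Finsupp.sum_single_index]
  simp [permAct]

lemma single_mul_single (g h : Equiv.Perm (Fin n)) (p q : R n) :
    (Finsupp.single g p * Finsupp.single h q : A n) =
      Finsupp.single (g * h) (p * permAct g q) := by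
  rw [single_mul, Finsupp.sum_single_index]
  simp [permAct]

lemma mul_add (x y z : A n) : x * (y + z) = x * y + x * z := by
  simp only [mul_def]
  rw [← Finsupp.sum_add]
  refine Finsupp.sum_congr fun g _ => Finsupp.sum_add_index' ?_ ?_
  · simp [permAct]
  · simp [permAct, _root_.mul_add]

lemma add_mul (x y z : A n) : (x + y) * z = x * z + y * z := by
  simp only [mul_def]
  refine Finsupp.sum_add_index' ?_ ?_
  · simp
  · intro g p q
    rw [← Finsupp.sum_add]
    simp [_root_.add_mul]

noncomputable def mulLeft (x : A n) : A n →+ A n := AddMonoidHom.mk' (x * ·) (mul_add x)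

noncomputable def mulRight (y : A n) : A n →+ A n := AddMonoidHom.mk' (· * y) (add_mul · · y)

lemma mul_sub (x y z : A n) : x * (y - z) = x * y - x * z := map_sub (mulLeft x) y z

lemma sub_mul (x y z : A n) : (x - y) * z = x * z - y * z := map_sub (mulRight z) x y

lemma mul_sum {ι : Type*} (x : A n) (s : Finset ι) (f : ι → A n) :
    x * ∑ i ∈ s, f i = ∑ i ∈ s, x * f i := map_sum (mulLeft x) f s

lemma sum_mul {ι : Type*} (s : Finset ι) (f : ι → A n) (y : A n) :
    (∑ i ∈ s, f i) * y = ∑ i ∈ s, f i * y := map_sum (mulRight y) f s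

lemma mul_one (x : A n) : x * 1 = x := by
  rw [one_def, mul_single]
  simp [permAct]

lemma one_mul (x : A n) : 1 * x = x := by
  rw [one_def, single_mul]
  simp [permAct_one]

lemma smul_one_mul_single (q : R n) (g : Equiv.Perm (Fin n)) (p : R n) :
    (q • 1 : A n) * Finsupp.single g p = Finsupp.single g (q * p) := by
  rw [one_def, Finsupp.smul_single, smul_eq_mul, _root_.mul_one, single_mul_single,
    _root_.one_mul, permAct_one]

end A

namespace Fin

variable {n : ℕ} [NeZero n]

lemma val_add_one_of_lt_of_lt {a b : Fin n} (h : a < b) : ((a + 1 : Fin n) : ℕ) = a + 1 :=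
  Fin.val_add_one_of_lt' (by omega)

lemma sum_Icc_add_one {M : Type*} [AddCommMonoid M] {k p p1 : Fin n}
    (hp1 : (p1 : ℕ) + 1 = p) (f : Fin n → M) :
    ∑ m ∈ Icc k p1, f (m + 1) = ∑ m ∈ Ioc k p, f m := by
  have hval (m : Fin n) (hm : (m : ℕ) < p) : ((m + 1 : Fin n) : ℕ) = m + 1 :=
    Fin.val_add_one_of_lt' (by omega)
  refine sum_nbij' (· + 1) (fun m => ⟨m - 1, by omega⟩) ?_ ?_ ?_ ?_ fun _ _ => rfl <;>
    intro m hm <;> simp only [mem_Icc, mem_Ioc, Fin.le_def, Fin.lt_def, Fin.ext_iff] at hm ⊢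
  · rw [hval m (by omega)]; omega
  · omega
  · rw [Fin.val_mk, hval m (by omega)]; omega
  · rw [hval _ (by rw [Fin.val_mk]; omega), Fin.val_mk]; omega

end Fin

section Cycle

variable {n : ℕ} [NeZero n]

lemma cyc_val {m j : Fin n} (hjm : j ≤ m) (x : Fin n) :
    (cyc m j x : ℕ) =
      if (j : ℕ) ≤ x ∧ (x : ℕ) ≤ m then (if (x : ℕ) = m then (j : ℕ) else x + 1) else x := by
  have hmj : ((m - j : Fin n) : ℕ) = m - j := Fin.coe_sub_iff_le.2 hjm
  have hx : cyc m j x = j + Fin.cycleRange (m - j) (x - j) := by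
    simp [cyc, sub_eq_neg_add]
  rw [hx]
  split_ifs with hin hxm
  · simp [Fin.ext hxm]
  · have hxj : ((x - j : Fin n) : ℕ) = x - j := Fin.coe_sub_iff_le.2 hin.1
    rw [Fin.cycleRange_of_lt (by omega), ← add_assoc, add_sub_cancel,
      Fin.val_add_one_of_lt' (by omega)]
  · rw [Fin.cycleRange_of_gt, add_sub_cancel]
    rcases le_or_gt j x with hjx | hxj
    · have := Fin.coe_sub_iff_le.2 hjx
      omega
    · have := Fin.coe_sub_iff_lt.2 hxj
      omega

lemma cyc_self (j : Fin n) : cyc j j = 1 := by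
  ext x
  rw [cyc_val le_rfl]
  split_ifs <;> simp <;> omega

lemma cyc_succ_mul_cyc {k m p : Fin n} (hkm : k ≤ m) (hmp : m < p) :
    cyc (m + 1) k * cyc p k = cyc p (k + 1) * cyc m k := by
  have hk := Fin.val_add_one_of_lt_of_lt (hkm.trans_lt hmp)
  have hm := Fin.val_add_one_of_lt_of_lt hmp
  ext x
  simp only [Equiv.Perm.mul_apply]
  rw [cyc_val (by omega), cyc_val (by omega), cyc_val (by omega), cyc_val hkm]
  split_ifs <;> omega

lemma inversions_inv_cyc {m j : Fin n} (hjm : j ≤ m) :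
    inversions (cyc m j)⁻¹ = {j} ×ˢ Ioc j m := by
  ext ⟨a, b⟩
  obtain ⟨x, rfl⟩ := (cyc m j).surjective a
  obtain ⟨y, rfl⟩ := (cyc m j).surjective b
  simp only [inversions, mem_filter, mem_univ, true_and, Equiv.Perm.coe_inv, Equiv.symm_apply_apply,
    mem_product, mem_singleton, mem_Ioc, Fin.lt_def, Fin.le_def, Fin.ext_iff, cyc_val hjm]
  split_ifs <;> omega

lemma Xg_cyc {m j : Fin n} (hjm : j ≤ m) : Xg (cyc m j) = ∏ b ∈ Ioc j m, X (j, b) := by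
  rw [Xg, inversions_inv_cyc hjm, prod_product, prod_singleton]

lemma gstar_cyc_self (j : Fin n) : gstar (cyc j j) = 1 := by
  rw [gstar, Xg_cyc le_rfl, cyc_self, Ioc_self, prod_empty, A.one_def]

lemma map_cyc_Ioc {k m p : Fin n} (hkm : k < m) (hmp : m ≤ p) :
    (Ioc k p).map (cyc m k).toEmbedding = insert k (Ioc (k + 1) p) := by
  have hk := Fin.val_add_one_of_lt_of_lt hkm
  ext c
  obtain ⟨x, rfl⟩ := (cyc m k).surjective c
  simp only [mem_map_equiv, Equiv.symm_apply_apply, mem_insert, mem_Ioc, Fin.lt_def, Fin.le_def,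
    Fin.ext_iff, cyc_val hkm.le]
  split_ifs <;> omega

lemma map_cyc_succ_Ioc {k m p : Fin n} (hkm : k ≤ m) (hmp : m < p) :
    (Ioc k m).map (cyc p (k + 1)).toEmbedding = Ioc (k + 1) (m + 1) := by
  have hk := Fin.val_add_one_of_lt_of_lt (hkm.trans_lt hmp)
  have hm := Fin.val_add_one_of_lt_of_lt hmp
  ext c
  obtain ⟨x, rfl⟩ := (cyc p (k + 1)).surjective c
  simp only [mem_map_equiv, Equiv.symm_apply_apply, mem_Ioc, Fin.lt_def, Fin.le_def,
    cyc_val (show k + 1 ≤ p by omega)]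
  split_ifs <;> omega

lemma Xg_cyc_succ_mul {k m p : Fin n} (hkm : k ≤ m) (hmp : m < p) :
    Xg (cyc (m + 1) k) * permAct (cyc (m + 1) k) (Xg (cyc p k)) =
      X (k, k + 1) * X (k + 1, k) *
        (Xg (cyc p (k + 1)) * permAct (cyc p (k + 1)) (Xg (cyc m k))) := by
  have hk := Fin.val_add_one_of_lt_of_lt (hkm.trans_lt hmp)
  have hm := Fin.val_add_one_of_lt_of_lt hmp
  have hk_lt_m : k < m + 1 := by omega
  have hfix₁ : cyc (m + 1) k k = k + 1 := by
    ext; rw [cyc_val hk_lt_m.le]; split_ifs <;> omega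
  have hfix₂ : cyc p (k + 1) k = k := by
    ext; rw [cyc_val (by omega)]; split_ifs <;> omega
  have hsplit : Ioc k (m + 1) = insert (k + 1) (Ioc (k + 1) (m + 1)) := by
    ext; simp only [mem_insert, mem_Ioc]; omega
  rw [Xg_cyc hk_lt_m.le, Xg_cyc (by omega), Xg_cyc (by omega), Xg_cyc hkm, permAct_prod_X,
    permAct_prod_X, map_cyc_Ioc hk_lt_m (by omega), map_cyc_succ_Ioc hkm hmp, hfix₁, hfix₂,
    hsplit, prod_insert (by simp), prod_insert (by simp only [mem_Ioc]; omega)]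
  ring

lemma gstar_cyc_succ_mul {k m p : Fin n} (hkm : k ≤ m) (hmp : m < p) :
    gstar (cyc (m + 1) k) * gstar (cyc p k) =
      (X (k, k + 1) * X (k + 1, k) : R n) • 1 * gstar (cyc p (k + 1)) * gstar (cyc m k) := by
  simp only [gstar]
  rw [A.smul_one_mul_single, A.single_mul_single, A.single_mul_single,
    cyc_succ_mul_cyc hkm hmp, Xg_cyc_succ_mul hkm hmp]
  simp only [mul_assoc]

end Cycle

/-- for `1 ≤ k < p ≤ n`, with `β*_{n-k+1,p} = Σ_{k ≤ m ≤ p} t_{m,k}*`,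
`β*_{n-k+1,p}·(id − t_{p,k}*) = (id − (t_k*)²·t_{p,k+1}*)·β*_{n-k+1,p-1}`. -/
theorem beta_recursion {n : ℕ} [NeZero n] (k k1 p p1 : Fin n)
    (hk1 : (k1 : ℕ) = (k : ℕ) + 1) (hp1 : (p1 : ℕ) + 1 = (p : ℕ)) (hkp : k < p) :
    (∑ m ∈ Finset.univ.filter (fun m : Fin n => k ≤ m ∧ m ≤ p), gstar (cyc m k)) *
        ((1 : A n) - gstar (cyc p k)) =
      ((1 : A n) -
          ((MvPolynomial.X (k, k1) * MvPolynomial.X (k1, k) : R n) • (1 : A n)) *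
            gstar (cyc p k1)) *
        (∑ m ∈ Finset.univ.filter (fun m : Fin n => k ≤ m ∧ m ≤ p1), gstar (cyc m k)) := by
  obtain rfl : k1 = k + 1 := Fin.ext (by rw [Fin.val_add_one_of_lt_of_lt hkp, hk1])
  have hIcc (q : Fin n) : univ.filter (fun m : Fin n => k ≤ m ∧ m ≤ q) = Icc k q := by
    ext; simp
  have hIco : Ico k p = Icc k p1 := by
    ext; simp only [mem_Ico, mem_Icc]; omega
  have hsplit_top : ∑ m ∈ Icc k p, gstar (cyc m k) =
      gstar (cyc p k) + ∑ m ∈ Icc k p1, gstar (cyc m k) := by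
    rw [Icc_eq_cons_Ico hkp.le, sum_cons, hIco]
  have hsplit_bot : ∑ m ∈ Icc k p, gstar (cyc m k) * gstar (cyc p k) =
      gstar (cyc p k) + ∑ m ∈ Icc k p1,
        (X (k, k + 1) * X (k + 1, k) : R n) • 1 * gstar (cyc p (k + 1)) * gstar (cyc m k) := by
    rw [Icc_eq_cons_Ioc hkp.le, sum_cons, gstar_cyc_self, A.one_mul,
      ← Fin.sum_Icc_add_one hp1]
    refine congrArg _ (sum_congr rfl fun m hm => ?_)
    rw [mem_Icc] at hm
    exact gstar_cyc_succ_mul hm.1 (by omega)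
  rw [hIcc, hIcc, A.mul_sub, A.sub_mul, A.mul_one, A.one_mul, A.sum_mul, A.mul_sum,
    hsplit_top, hsplit_bot]
  abel
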